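/- In the computation offloading game where device i prefers x_i = 1 over x_i = 0 exactly when ∑_{m≠i} a_m x_m ≤ L_i (strictly prefers when <), the function Φ(x) = (1/2) ∑_i ∑_{m≠i} a_i x_i a_m x_m + ∑_i a_i L_i (1 − x_i) is an (ordinal) potential: any unilateral strategy change that strictly decreases a device's cost strictly decreases Φ. -/
import Mathlib

open Finset

lemma sq_expand {N : ℕ} (a y : Fin N → ℝ) :
    ∑ j, ∑ m ∈ univ.erase j, a j * y j * (a m * y m)
      = (∑ j, a j * y j)^2 - ∑ j, (a j * y j)^2 := by
  rw [sq, Finset.sum_mul_sum]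
  rw [← Finset.sum_sub_distrib]
  apply Finset.sum_congr rfl
  intro j _
  rw [← Finset.add_sum_erase _ _ (mem_univ j)]
  ring_nf

lemma phi_diff {N : ℕ} (a L : Fin N → ℝ) (i : Fin N) (x : Fin N → ℝ) :
    ((1 / 2) * ∑ j, ∑ m ∈ univ.erase j, a j * (Function.update x i 1) j * (a m * (Function.update x i 1) m)
        + ∑ j, a j * L j * (1 - (Function.update x i 1) j))
    - ((1 / 2) * ∑ j, ∑ m ∈ univ.erase j, a j * (Function.update x i 0) j * (a m * (Function.update x i 0) m)
        + ∑ j, a j * L j * (1 - (Function.update x i 0) j))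
    = a i * ((∑ m ∈ univ.erase i, a m * x m) - L i) := by
  rw [sq_expand, sq_expand]
  have key : ∀ (f : Fin N → ℝ → ℝ) (t : ℝ),
      (∑ j, f j (Function.update x i t j))
        = f i t + ∑ j ∈ univ.erase i, f j (x j) := by
    intro f t
    rw [← Finset.add_sum_erase _ _ (mem_univ i), Function.update_self]
    congr 1
    apply Finset.sum_congr rfl
    intro j hj
    rw [Function.update_of_ne (mem_erase.mp hj).1]
  rw [key (fun j v => a j * v) 1, key (fun j v => a j * v) 0,
      key (fun j v => (a j * v)^2) 1, key (fun j v => (a j * v)^2) 0,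
      key (fun j v => a j * L j * (1 - v)) 1, key (fun j v => a j * L j * (1 - v)) 0]
  have : ∑ j ∈ univ.erase i, a j * x j = ∑ m ∈ univ.erase i, a m * x m := rfl
  ring

open Finset in
/-- Φ is an ordinal potential for the offloading game: a unilateral change that
strictly decreases a device's cost strictly decreases Φ. -/
theorem potential_game_ordinal (N : ℕ) (a L : Fin N → ℝ) (ha : ∀ i, 0 < a i)
    (C : Fin N → (Fin N → ℝ) → ℝ)
    (hpref1 : ∀ i (x : Fin N → ℝ),
      C i (Function.update x i 1) < C i (Function.update x i 0) ↔
        (∑ m ∈ univ.erase i, a m * x m) < L i)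
    (hpref0 : ∀ i (x : Fin N → ℝ),
      C i (Function.update x i 0) < C i (Function.update x i 1) ↔
        (∑ m ∈ univ.erase i, a m * x m) > L i) :
    ∀ i (x : Fin N → ℝ), (∀ j, x j = 0 ∨ x j = 1) →
      ((C i (Function.update x i 1) < C i (Function.update x i 0) →
        (fun y => (1 / 2) * ∑ j, ∑ m ∈ univ.erase j, a j * y j * (a m * y m)
            + ∑ j, a j * L j * (1 - y j)) (Function.update x i 1) <
        (fun y => (1 / 2) * ∑ j, ∑ m ∈ univ.erase j, a j * y j * (a m * y m)
            + ∑ j, a j * L j * (1 - y j)) (Function.update x i 0)) ∧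
       (C i (Function.update x i 0) < C i (Function.update x i 1) →
        (fun y => (1 / 2) * ∑ j, ∑ m ∈ univ.erase j, a j * y j * (a m * y m)
            + ∑ j, a j * L j * (1 - y j)) (Function.update x i 0) <
        (fun y => (1 / 2) * ∑ j, ∑ m ∈ univ.erase j, a j * y j * (a m * y m)
            + ∑ j, a j * L j * (1 - y j)) (Function.update x i 1))) := by
  intro i x _
  have hd := phi_diff a L i x
  have hai := ha i
  constructor <;> intro h
  · have hS := (hpref1 i x).mp h
    simp only
    nlinarith
  · have hS := (hpref0 i x).mp h
    simp only
    nlinarith
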